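/- Slope property of the spread-out Cantor approximation: let S ⊂ ℝ² be the finite set consisting, for each 0 ≤ k ≤ N-1 and each of the 2^k centers c_i^k, of the four points (c_i^k ± 1/(4·3^{k+1}), ± 1/(4·3^{k+1})), where consecutive centers at levels k, k' correspond to middle-third intervals of the Cantor construction. Then for any two points y = (y₁,y₂), z = (z₁,z₂) in S with y₁ ≠ z₁, we have |y₂ - z₂| ≤ |y₁ - z₁|. -/
import Mathlib


/-- The center of the removed open middle third of the generation-`k` Cantor interval
specified by the sequence of left/right choices `b : Fin k → Bool` (this is also the
center of the Cantor interval itself). -/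
noncomputable def cantorThirdCenter (k : ℕ) (b : Fin k → Bool) : ℝ :=
  (∑ j : Fin k, if b j then 2 * (3 : ℝ) ^ (-((j : ℤ) + 1)) else 0)
    + (3 : ℝ) ^ (-(k : ℤ)) / 2

lemma ctc_zero (b : Fin 0 → Bool) : cantorThirdCenter 0 b = 1/2 := by
  simp [cantorThirdCenter]

lemma ctc_succ (k : ℕ) (b : Fin (k+1) → Bool) :
    cantorThirdCenter (k+1) b
      = (if b 0 then (2:ℝ)/3 else 0) + cantorThirdCenter k (fun j => b j.succ) / 3 := by
  unfold cantorThirdCenter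
  rw [Fin.sum_univ_succ]
  have h3 : (3:ℝ) ≠ 0 := by norm_num
  have hterm : ∀ j : Fin k,
      (if b j.succ then 2 * (3 : ℝ) ^ (-(((j.succ : Fin (k+1)) : ℤ) + 1)) else 0)
        = (if b j.succ then 2 * (3 : ℝ) ^ (-((j : ℤ) + 1)) else 0) / 3 := by
    intro j
    have hc : ((j.succ : Fin (k+1)) : ℤ) = (j : ℤ) + 1 := by simp
    rw [hc]
    split
    · rw [show -(((j:ℤ)+1)+1) = (-((j:ℤ)+1)) + (-1) by ring, zpow_add₀ h3]
      simp; ring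
    · simp
  simp only [hterm]
  rw [← Finset.sum_div, add_div]
  have h0 : (if b 0 = true then 2 * (3:ℝ) ^ (-(((0 : Fin (k+1)) : ℤ) + 1)) else 0)
      = (if b 0 = true then (2:ℝ)/3 else 0) := by
    split <;> norm_num
  have hk : (3:ℝ) ^ (-((k+1 : ℕ) : ℤ)) / 2 = (3:ℝ) ^ (-(k:ℤ)) / 2 / 3 := by
    push_cast
    rw [show -((k:ℤ)+1) = -(k:ℤ) + (-1) by ring, zpow_add₀ h3]
    norm_num; ring
  rw [h0, hk]; ring

lemma zpow3_pos (a : ℤ) : (0:ℝ) < (3:ℝ) ^ a := by positivity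

lemma zpow3_succ (k : ℕ) : (3:ℝ) ^ (-((k+1 : ℕ) : ℤ)) = (3:ℝ) ^ (-(k:ℤ)) / 3 := by
  push_cast
  rw [show -((k:ℤ)+1) = -(k:ℤ) + (-1) by ring, zpow_add₀ (by norm_num : (3:ℝ) ≠ 0)]
  norm_num; ring

lemma ctc_mem (k : ℕ) (b : Fin k → Bool) :
    (3:ℝ)^(-(k:ℤ))/2 ≤ cantorThirdCenter k b ∧
      cantorThirdCenter k b ≤ 1 - (3:ℝ)^(-(k:ℤ))/2 := by
  induction k with
  | zero => rw [ctc_zero]; norm_num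
  | succ n ih =>
    obtain ⟨h1, h2⟩ := ih (fun j => b j.succ)
    rw [ctc_succ, zpow3_succ]
    have hp := zpow3_pos (-(n:ℤ))
    split <;> constructor <;> linarith

lemma zpow3_two (m : ℕ) : (3:ℝ) ^ (-((m+2:ℕ):ℤ)) = (3:ℝ) ^ (-(m:ℤ)) / 9 := by
  rw [show (m+2:ℕ) = (m+1)+1 by ring, zpow3_succ (m+1), zpow3_succ m]
  ring

lemma ctc_low (n : ℕ) (b : Fin (n+1) → Bool) (h : b 0 = false) :
    cantorThirdCenter (n+1) b ≤ 1/3 - (3:ℝ)^(-(n:ℤ))/6 := by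
  obtain ⟨h1, h2⟩ := ctc_mem n (fun j => b j.succ)
  rw [ctc_succ, h, if_neg (by simp)]
  linarith

lemma ctc_high (n : ℕ) (b : Fin (n+1) → Bool) (h : b 0 = true) :
    2/3 + (3:ℝ)^(-(n:ℤ))/6 ≤ cantorThirdCenter (n+1) b := by
  obtain ⟨h1, h2⟩ := ctc_mem n (fun j => b j.succ)
  rw [ctc_succ, h, if_pos rfl]
  linarith

lemma ctc_sep : ∀ (k k' : ℕ) (b : Fin k → Bool) (b' : Fin k' → Bool),
    (k = k' ∧ cantorThirdCenter k b = cantorThirdCenter k' b') ∨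
    ((3:ℝ)^(-((k+1:ℕ):ℤ)) + (3:ℝ)^(-((k'+1:ℕ):ℤ)))/2
      ≤ |cantorThirdCenter k b - cantorThirdCenter k' b'| := by
  intro k
  induction k with
  | zero =>
    intro k' b b'
    match k' with
    | 0 => exact Or.inl ⟨rfl, by rw [ctc_zero, ctc_zero]⟩
    | m+1 =>
      right
      rw [ctc_zero, zpow3_two m, show (3:ℝ)^(-((0+1:ℕ):ℤ)) = 1/3 from by norm_num]
      have hm := zpow3_pos (-(m:ℤ))
      rcases hb' : b' 0 with _ | _
      · have := ctc_low m b' hb'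
        rw [abs_of_nonneg (by linarith)]
        linarith
      · have := ctc_high m b' hb'
        rw [abs_of_nonpos (by linarith)]
        linarith
  | succ n ih =>
    intro k' b b'
    match k' with
    | 0 =>
      right
      rw [ctc_zero, zpow3_two n, show (3:ℝ)^(-((0+1:ℕ):ℤ)) = 1/3 from by norm_num]
      have hm := zpow3_pos (-(n:ℤ))
      rcases hb : b 0 with _ | _
      · have := ctc_low n b hb
        rw [abs_of_nonpos (by linarith)]
        linarith
      · have := ctc_high n b hb
        rw [abs_of_nonneg (by linarith)]
        linarith
    | m+1 =>
      have hn1 := zpow3_pos (-(n:ℤ))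
      have hm1 := zpow3_pos (-(m:ℤ))
      by_cases hbb : b 0 = b' 0
      · -- same first bit: recurse on tails
        rcases ih m (fun j => b j.succ) (fun j => b' j.succ) with ⟨hkk, hcc⟩ | hsep
        · left
          subst hkk
          exact ⟨rfl, by rw [ctc_succ, ctc_succ, hbb, hcc]⟩
        · right
          rw [ctc_succ, ctc_succ, hbb,
            show ((if b' 0 then (2:ℝ)/3 else 0) + cantorThirdCenter n (fun j => b j.succ) / 3)
              - ((if b' 0 then (2:ℝ)/3 else 0) + cantorThirdCenter m (fun j => b' j.succ) / 3)
              = (cantorThirdCenter n (fun j => b j.succ)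
                  - cantorThirdCenter m (fun j => b' j.succ)) / 3 by ring,
            abs_div, abs_of_pos (by norm_num : (0:ℝ) < 3)]
          rw [zpow3_succ n, zpow3_succ m] at hsep
          rw [zpow3_two n, zpow3_two m]
          linarith
      · -- different first bits
        right
        rw [zpow3_two n, zpow3_two m]
        rcases hb : b 0 with _ | _ <;> rcases hb' : b' 0 with _ | _
        · exact absurd (hb.trans hb'.symm) hbb
        · have h1 := ctc_low n b hb
          have h2 := ctc_high m b' hb'
          rw [abs_of_nonpos (by linarith)]
          linarith
        · have h1 := ctc_high n b hb
          have h2 := ctc_low m b' hb'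
          rw [abs_of_nonneg (by linarith)]
          linarith
        · exact absurd (hb.trans hb'.symm) hbb

lemma slope_aux (c c' p q σ τ σ' τ' : ℝ) (hp : 0 < p) (hq : 0 < q)
    (hτ : |τ| ≤ 1) (hτ' : |τ'| ≤ 1)
    (hσ : |σ| ≤ 1) (hσ' : |σ'| ≤ 1)
    (h : (p + q)/2 ≤ |c - c'|) :
    |τ*(p/4) - τ'*(q/4)| ≤ |c + σ*(p/4) - (c' + σ'*(q/4))| := by
  have habs : ∀ (a b : ℝ), |a - b| ≤ |a| + |b| := by
    intro a b
    calc |a - b| = |a + (-b)| := by ring_nf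
    _ ≤ |a| + |-b| := abs_add_le _ _
    _ = |a| + |b| := by rw [abs_neg]
  have e1 : |τ*(p/4)| ≤ p/4 := by
    rw [abs_mul, abs_of_pos (by linarith : (0:ℝ) < p/4)]
    nlinarith [abs_nonneg τ]
  have e2 : |τ'*(q/4)| ≤ q/4 := by
    rw [abs_mul, abs_of_pos (by linarith : (0:ℝ) < q/4)]
    nlinarith [abs_nonneg τ']
  have e3 : |σ*(p/4)| ≤ p/4 := by
    rw [abs_mul, abs_of_pos (by linarith : (0:ℝ) < p/4)]
    nlinarith [abs_nonneg σ]
  have e4 : |σ'*(q/4)| ≤ q/4 := by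
    rw [abs_mul, abs_of_pos (by linarith : (0:ℝ) < q/4)]
    nlinarith [abs_nonneg σ']
  have h1 : |τ*(p/4) - τ'*(q/4)| ≤ p/4 + q/4 := le_trans (habs _ _) (by linarith)
  have h2 : |c - c'| ≤ |c + σ*(p/4) - (c' + σ'*(q/4))| + (p/4 + q/4) := by
    calc |c - c'| = |(c + σ*(p/4) - (c' + σ'*(q/4))) - (σ*(p/4) - σ'*(q/4))| := by ring_nf
    _ ≤ |c + σ*(p/4) - (c' + σ'*(q/4))| + |σ*(p/4) - σ'*(q/4)| := habs _ _
    _ ≤ _ := by have := habs (σ*(p/4)) (σ'*(q/4)); linarith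
  linarith

lemma slope_aux2 (c p τ τ' : ℝ) (hp : 0 < p) (σ σ' : ℝ)
    (hτ : |τ| ≤ 1) (hτ' : |τ'| ≤ 1)
    (hσ : σ = 1 ∨ σ = -1) (hσ' : σ' = 1 ∨ σ' = -1)
    (hne : c + σ*(p/4) ≠ c + σ'*(p/4)) :
    |τ*(p/4) - τ'*(p/4)| ≤ |c + σ*(p/4) - (c + σ'*(p/4))| := by
  have hss : σ ≠ σ' := fun hs => hne (by rw [hs])
  obtain ⟨hτ1, hτ2⟩ := abs_le.mp hτ
  obtain ⟨hτ'1, hτ'2⟩ := abs_le.mp hτ'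
  have key : |τ*(p/4) - τ'*(p/4)| ≤ p/2 := by
    rcases abs_cases (τ*(p/4) - τ'*(p/4)) with ⟨he, _⟩ | ⟨he, _⟩ <;> rw [he] <;>
      nlinarith [mul_nonneg (by linarith : (0:ℝ) ≤ 1 - τ) hp.le,
        mul_nonneg (by linarith : (0:ℝ) ≤ 1 + τ) hp.le,
        mul_nonneg (by linarith : (0:ℝ) ≤ 1 - τ') hp.le,
        mul_nonneg (by linarith : (0:ℝ) ≤ 1 + τ') hp.le]
  rcases hσ with rfl | rfl <;> rcases hσ' with rfl | rfl
  · exact absurd rfl hss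
  · rw [show c + 1*(p/4) - (c + -1*(p/4)) = p/2 by ring,
      abs_of_nonneg (by linarith : (0:ℝ) ≤ p/2)]
    exact key
  · rw [show c + -1*(p/4) - (c + 1*(p/4)) = -(p/2) by ring, abs_neg,
      abs_of_nonneg (by linarith : (0:ℝ) ≤ p/2)]
    exact key
  · exact absurd rfl hss

/-- The support of the spread-out Cantor approximation `ω̂_N`: for each level `0 ≤ k < N`
and each middle-third center `c = c_i^k`, the four points
`(c ± 1/(4·3^{k+1}), ± 1/(4·3^{k+1}))`. -/
def spreadSupport (N : ℕ) : Set (ℝ × ℝ) :=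
  {p | ∃ k < N, ∃ b : Fin k → Bool, ∃ s t : Bool,
    p = (cantorThirdCenter k b + (if s then (1 : ℝ) else -1) / (4 * 3 ^ (k + 1)),
         (if t then (1 : ℝ) else -1) / (4 * 3 ^ (k + 1)))}

/-- Slope property: any two points of the spread-out Cantor support with distinct first
coordinates are joined by a segment of slope at most `1` in modulus. -/
theorem stmt_19 (N : ℕ) :
    ∀ y ∈ spreadSupport N, ∀ z ∈ spreadSupport N,
      y.1 ≠ z.1 → |y.2 - z.2| ≤ |y.1 - z.1| := by
  rintro y ⟨k, hk, b, s, t, rfl⟩ z ⟨k', hk', b', s', t', rfl⟩ hne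
  have habs : ∀ u : Bool, |(if u then (1:ℝ) else -1)| ≤ 1 := by
    intro u; cases u <;> simp
  have hpm : ∀ u : Bool, (if u then (1:ℝ) else -1) = 1 ∨ (if u then (1:ℝ) else -1) = -1 := by
    intro u; cases u <;> simp
  have hp0 : (0:ℝ) < (3:ℝ)^(-((k+1:ℕ):ℤ)) := zpow3_pos _
  have hq0 : (0:ℝ) < (3:ℝ)^(-((k'+1:ℕ):ℤ)) := zpow3_pos _
  have hpe : ∀ (a : ℝ), a / (4 * (3:ℝ)^(k+1)) = a * ((3:ℝ)^(-((k+1:ℕ):ℤ))/4) := by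
    intro a
    rw [zpow_neg, zpow_natCast, div_eq_mul_inv, mul_inv]
    ring
  have hqe : ∀ (a : ℝ), a / (4 * (3:ℝ)^(k'+1)) = a * ((3:ℝ)^(-((k'+1:ℕ):ℤ))/4) := by
    intro a
    rw [zpow_neg, zpow_natCast, div_eq_mul_inv, mul_inv]
    ring
  dsimp only at hne ⊢
  rw [hpe, hqe] at hne
  rw [hpe, hqe, hpe, hqe]
  rcases ctc_sep k k' b b' with ⟨rfl, hcc⟩ | hsep
  · rw [hcc] at hne ⊢
    exact slope_aux2 _ _ _ _ hp0 _ _ (habs t) (habs t') (hpm s) (hpm s') hne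
  · exact slope_aux _ _ _ _ _ _ _ _ hp0 hq0 (habs t) (habs t') (habs s) (habs s') hsep
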